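/- arXiv:1402.5334 — 2 statements merged into one kernel-verified Lean document; each statement's English description precedes it below -/
import Mathlib

section
/- For row vectors Z, W ∈ ℂⁿ, the 2n×2n hermitian block matrix [[(1+|W|²) I_n, Z̄ᵀ W],[W̄ᵀ Z, (1+|Z|²) I_n]] is positive definite, where |Z|² = Σ Z_a Z̄_a and Z̄ᵀ W denotes the n×n matrix with entries Z̄_a W_b. -/
/-!
The matrix is `1 + Cᴴ * C`, where `C (x, y) = x ⊗ W̄ + Z̄ ⊗ y` maps `ℂⁿ ⊕ ℂⁿ` to `ℂⁿ ⊗ ℂⁿ`: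
the diagonal blocks of the Gram matrix `Cᴴ * C` are `|W|² I` and `|Z|² I`, the off-diagonal ones
are `Z̄ᵀ W` and `W̄ᵀ Z`. A Gram matrix is positive semidefinite, so adding `1` makes it definite.
-/

open Matrix Complex ComplexOrder

namespace Matrix

variable {m n R : Type*} [Fintype m] [Fintype n] [DecidableEq m] [DecidableEq n]
  [CommRing R] [StarRing R]

/-- The matrix of `x ↦ x ⊗ star w`. -/
def tensorRight (w : n → R) : Matrix (m × n) m R :=
  of fun p a => (1 : Matrix m m R) p.1 a * star (w p.2)

/-- The matrix of `y ↦ star z ⊗ y`. -/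
def tensorLeft (z : m → R) : Matrix (m × n) n R :=
  of fun p b => star (z p.1) * (1 : Matrix n n R) p.2 b

omit [DecidableEq n] in
theorem conjTranspose_tensorRight_mul_self (w : n → R) :
    (tensorRight w : Matrix (m × n) m R)ᴴ * (tensorRight w : Matrix (m × n) m R) =
      (star w ⬝ᵥ w) • 1 := by
  ext a b
  rw [mul_apply, Fintype.sum_prod_type]
  simp [tensorRight, one_apply, dotProduct, apply_ite star, eq_comm, mul_comm]

omit [DecidableEq m] in
theorem conjTranspose_tensorLeft_mul_self (z : m → R) :
    (tensorLeft z : Matrix (m × n) n R)ᴴ * (tensorLeft z : Matrix (m × n) n R) =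
      (star z ⬝ᵥ z) • 1 := by
  ext a b
  rw [mul_apply, Fintype.sum_prod_type_right]
  simp [tensorLeft, one_apply, dotProduct, apply_ite star, eq_comm, mul_comm]

theorem conjTranspose_tensorRight_mul_tensorLeft (z : m → R) (w : n → R) :
    (tensorRight w : Matrix (m × n) m R)ᴴ * (tensorLeft z : Matrix (m × n) n R) =
      vecMulVec (star z) w := by
  ext a b
  rw [mul_apply, Fintype.sum_prod_type]
  simp [tensorRight, tensorLeft, one_apply, vecMulVec, apply_ite star, mul_comm]

theorem conjTranspose_tensorLeft_mul_tensorRight (z : m → R) (w : n → R) :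
    (tensorLeft z : Matrix (m × n) n R)ᴴ * (tensorRight w : Matrix (m × n) m R) =
      vecMulVec (star w) z := by
  ext a b
  rw [mul_apply, Fintype.sum_prod_type]
  simp [tensorRight, tensorLeft, one_apply, vecMulVec, apply_ite star, mul_comm]

theorem conjTranspose_mul_self_fromCols_tensorRight_tensorLeft (z : m → R) (w : n → R) :
    (fromCols (tensorRight w) (tensorLeft z))ᴴ * fromCols (tensorRight w) (tensorLeft z) =
      fromBlocks ((star w ⬝ᵥ w) • 1) (vecMulVec (star z) w)
        (vecMulVec (star w) z) ((star z ⬝ᵥ z) • 1) := by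
  rw [conjTranspose_fromCols_eq_fromRows_conjTranspose, fromRows_mul_fromCols,
    conjTranspose_tensorRight_mul_self, conjTranspose_tensorRight_mul_tensorLeft,
    conjTranspose_tensorLeft_mul_tensorRight, conjTranspose_tensorLeft_mul_self]

theorem posDef_fromBlocks_one_add_vecMulVec [PartialOrder R] [StarOrderedRing R]
    [NoZeroDivisors R] (z : m → R) (w : n → R) :
    (fromBlocks ((1 + star w ⬝ᵥ w) • 1) (vecMulVec (star z) w)
      (vecMulVec (star w) z) ((1 + star z ⬝ᵥ z) • 1)).PosDef := by
  set C := fromCols (tensorRight w) (tensorLeft z)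
  have hgram : fromBlocks ((1 + star w ⬝ᵥ w) • 1) (vecMulVec (star z) w)
      (vecMulVec (star w) z) ((1 + star z ⬝ᵥ z) • (1 : Matrix n n R)) = 1 + Cᴴ * C := by
    rw [conjTranspose_mul_self_fromCols_tensorRight_tensorLeft, ← fromBlocks_one,
      fromBlocks_add]
    simp only [add_smul, one_smul, zero_add]
  rw [hgram]
  exact PosDef.one.add_posSemidef (posSemidef_conjTranspose_mul_self C)

end Matrix

/-- for row vectors `Z, W ∈ ℂⁿ`, the hermitian block matrix
`[[(1+|W|²)I, Z̄ᵀW],[W̄ᵀZ, (1+|Z|²)I]]` is positive definite. -/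
theorem blockMatrix_posDef {n : ℕ} (Z W : Fin n → ℂ) :
    (Matrix.fromBlocks
        (((1 + ∑ a, Complex.normSq (W a) : ℝ) : ℂ) • (1 : Matrix (Fin n) (Fin n) ℂ))
        (Matrix.of fun a b => (starRingEnd ℂ) (Z a) * W b)
        (Matrix.of fun a b => (starRingEnd ℂ) (W a) * Z b)
        (((1 + ∑ a, Complex.normSq (Z a) : ℝ) : ℂ) • (1 : Matrix (Fin n) (Fin n) ℂ))).PosDef := by
  have one_add_normSq (v : Fin n → ℂ) :
      ((1 + ∑ a, Complex.normSq (v a) : ℝ) : ℂ) = 1 + star v ⬝ᵥ v := by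
    simp [dotProduct, normSq_eq_conj_mul_self]
  rw [one_add_normSq, one_add_normSq]
  exact posDef_fromBlocks_one_add_vecMulVec Z W
end

section
/- Let G be the real symmetric 2n×2n matrix G = (1/(1−τ⁴))[(1+τ²)I_{2n} + [[(q−τ²)M, −qM],[−qM, (q−τ²)M]]] with |τ| < 1, q = 2τ²/(1−τ²)², M = E_nᵀE_n, and define g(v,w) = 2 Re(v̄ G wᵀ) for v, w ∈ ℂ^{2n}. Then for all z, z' ∈ ℂⁿ, g((z; −z̄), (z'; z̄')) = 0; i.e., the subspaces {(z; −z̄) : z ∈ ℂⁿ} and {(z; z̄) : z ∈ ℂⁿ} of ℂ^{2n} (viewed as a real vector space) are g-orthogonal. -/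
open Matrix Complex

noncomputable section

/-- The matrix `M = E_nᵀ E_n`, with a single 1 in the bottom-right entry. -/
def cornerM (n : ℕ) : Matrix (Fin (n + 1)) (Fin (n + 1)) ℝ :=
  Matrix.of fun i j => if i = Fin.last n ∧ j = Fin.last n then 1 else 0

/-- The matrix `G` representing the Stenzel Kähler metric at the base point. -/
def stenzelG (n : ℕ) (τ : ℝ) : Matrix (Fin (n + 1) ⊕ Fin (n + 1)) (Fin (n + 1) ⊕ Fin (n + 1)) ℝ :=
  (1 / (1 - τ ^ 4)) •
    ((1 + τ ^ 2) • (1 : Matrix (Fin (n + 1) ⊕ Fin (n + 1)) (Fin (n + 1) ⊕ Fin (n + 1)) ℝ)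
      + Matrix.fromBlocks
          ((2 * τ ^ 2 / (1 - τ ^ 2) ^ 2 - τ ^ 2) • cornerM n)
          (-(2 * τ ^ 2 / (1 - τ ^ 2) ^ 2) • cornerM n)
          (-(2 * τ ^ 2 / (1 - τ ^ 2) ^ 2) • cornerM n)
          ((2 * τ ^ 2 / (1 - τ ^ 2) ^ 2 - τ ^ 2) • cornerM n))

/-- `g(v,w) = 2 Re(v̄ G wᵀ)`. -/
def stenzelg (n : ℕ) (τ : ℝ) (v w : Fin (n + 1) ⊕ Fin (n + 1) → ℂ) : ℝ :=
  2 * (∑ i, ∑ j, (starRingEnd ℂ) (v i) * (stenzelG n τ i j : ℂ) * w j).re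

open ComplexConjugate

theorem stenzelG_swap_swap (n : ℕ) (τ : ℝ) (i j : Fin (n + 1) ⊕ Fin (n + 1)) :
    stenzelG n τ i.swap j.swap = stenzelG n τ i j := by
  cases i <;> cases j <;> simp [stenzelG, Matrix.one_apply]

theorem re_eq_zero_of_conj_eq_neg {z : ℂ} (h : conj z = -z) : z.re = 0 := by
  have := congrArg Complex.re h
  rw [conj_re, neg_re] at this
  linarith

/-- Reindexing by `e` turns the conjugate of `∑ v̄ᵢ Aᵢⱼ wⱼ` into its negative. -/
theorem re_sum_conj_mul_mul_eq_zero {ι : Type*} [Fintype ι] (e : ι ≃ ι) (A : Matrix ι ι ℝ)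
    (hA : ∀ i j, A (e i) (e j) = A i j) {v w : ι → ℂ}
    (hv : ∀ i, conj (v (e i)) = -v i) (hw : ∀ j, w (e j) = conj (w j)) :
    (∑ i, ∑ j, conj (v i) * (A i j : ℂ) * w j).re = 0 := by
  apply re_eq_zero_of_conj_eq_neg
  have hv' : ∀ i, v (e i) = -conj (v i) := fun i => by
    rw [← conj_conj (v (e i)), hv, map_neg]
  calc conj (∑ i, ∑ j, conj (v i) * (A i j : ℂ) * w j)
      = ∑ i, ∑ j, v i * (A i j : ℂ) * conj (w j) := by simp
    _ = ∑ i, ∑ j, v (e i) * (A (e i) (e j) : ℂ) * conj (w (e j)) :=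
        (Fintype.sum_equiv e _ _ fun i =>
          e.sum_comp fun j => v (e i) * (A (e i) j : ℂ) * conj (w j)).symm
    _ = -∑ i, ∑ j, conj (v i) * (A i j : ℂ) * w j := by
        simp [hv', hA, hw, Finset.sum_neg_distrib]

theorem vertical_horizontal_g_orthogonal_general {n : ℕ} {τ : ℝ}
    (z z' : Fin (n + 1) → ℂ) :
    stenzelg n τ (Sum.elim z fun i => -(starRingEnd ℂ) (z i))
      (Sum.elim z' fun i => (starRingEnd ℂ) (z' i)) = 0 := by
  rw [stenzelg, re_sum_conj_mul_mul_eq_zero (Equiv.sumComm _ _) _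
    (stenzelG_swap_swap n τ) (by rintro (i | i) <;> simp) (by rintro (j | j) <;> simp), mul_zero]

/-- vertical vectors `(z; -z̄)` and horizontal vectors `(z'; z̄')`
are `g`-orthogonal. -/
theorem vertical_horizontal_g_orthogonal {n : ℕ} {τ : ℝ} (hτ : |τ| < 1)
    (z z' : Fin (n + 1) → ℂ) :
    stenzelg n τ (Sum.elim z fun i => -(starRingEnd ℂ) (z i))
      (Sum.elim z' fun i => (starRingEnd ℂ) (z' i)) = 0 :=
  vertical_horizontal_g_orthogonal_general z z'
end
end
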